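/- Let m ≥ 1 and β > 0. If X(t) = X_0 e^{ibt} (with X_0 ∈ ℂ^n and b ∈ ℝ) satisfies X'' + βX' = (-1)^{m+1}M^m X for all t, then either b = 0 or X_0 = 0; in either case X_0 has all entries equal. That is, there are no nontrivial planar solutions evolving by pure rotation when β > 0. -/

import Mathlib

/-!
Plugging `X(t) = e^{ibt} X₀` into the equation at `t = 0` shows that `X₀` is an eigenvector of
the Hermitian matrix `A = (-1)^{m+1} M^m` for the eigenvalue `λ = (ib)² + β·ib`. Eigenvalues of
Hermitian matrices are real, and `Im λ = βb`, so `b = 0` or `X₀ = 0`. Either way `A X₀ = 0`;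
for Hermitian `M` the kernel of `M^m` is that of `M`, and the kernel of the discrete Laplacian on
the cycle consists of the constant vectors.
-/

open Matrix Complex
open scoped ComplexOrder

/-- The discrete Laplacian circulant matrix `circ(-2,1,0,…,0,1)` over `ℂ`. -/
noncomputable def lapM (n : ℕ) [NeZero n] : Matrix (Fin n) (Fin n) ℂ :=
  Matrix.of fun i j =>
    (if j = i + 1 then 1 else 0) + (if j = i - 1 then 1 else 0) + (if j = i then -2 else 0)

lemma deriv_cexp_mul_smul {E : Type*} [NormedAddCommGroup E] [NormedSpace ℂ E]
    (c : ℂ) (v : E) :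
    deriv (fun t : ℝ => exp (c * t) • v) = fun t : ℝ => exp (c * t) • c • v := by
  funext t
  have hlin : HasDerivAt (fun s : ℝ => c * (s : ℂ)) c t := by
    simpa using (ofRealCLM.hasDerivAt (x := t)).const_mul c
  rw [(hlin.cexp.smul_const v).deriv, smul_smul]

namespace Matrix

variable {𝕜 ι : Type*} [RCLike 𝕜] [Fintype ι]

lemma IsHermitian.im_eq_zero_of_mulVec_eq_smul {A : Matrix ι ι 𝕜} (hA : A.IsHermitian)
    {v : ι → 𝕜} {μ : 𝕜}
    (hv : A *ᵥ v = μ • v) (hv0 : v ≠ 0) : RCLike.im μ = 0 := by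
  obtain ⟨hre, him⟩ := RCLike.pos_iff.1 (dotProduct_star_self_pos_iff.2 hv0)
  have h := hA.im_star_dotProduct_mulVec_self v
  rw [hv, dotProduct_smul, smul_eq_mul, RCLike.mul_im, him, mul_zero, zero_add] at h
  exact (mul_eq_zero.1 h).resolve_right hre.ne'

lemma IsHermitian.mulVec_eq_zero_of_sq_mulVec_eq_zero [DecidableEq ι] {A : Matrix ι ι 𝕜}
    (hA : A.IsHermitian) {v : ι → 𝕜} (hv : (A ^ 2) *ᵥ v = 0) : A *ᵥ v = 0 := by
  rw [← dotProduct_star_self_eq_zero, star_mulVec, hA.eq, ← dotProduct_mulVec, mulVec_mulVec,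
    ← sq, hv, dotProduct_zero]

lemma IsHermitian.mulVec_eq_zero_of_pow_mulVec_eq_zero [DecidableEq ι] {A : Matrix ι ι 𝕜}
    (hA : A.IsHermitian) {v : ι → 𝕜} {m : ℕ} (hm : 1 ≤ m)
    (hv : (A ^ m) *ᵥ v = 0) : A *ᵥ v = 0 := by
  induction m, hm using Nat.le_induction with
  | base => simpa using hv
  | succ k hk ih =>
    apply ih
    obtain ⟨j, rfl⟩ := Nat.exists_eq_add_of_le' hk
    rw [pow_succ', ← mulVec_mulVec]
    apply hA.mulVec_eq_zero_of_sq_mulVec_eq_zero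
    rwa [mulVec_mulVec, ← pow_add, add_comm]

end Matrix

open Fin.NatCast in
lemma Fin.apply_eq_apply_of_forall_apply_add_one {n : ℕ} [NeZero n] {α : Type*}
    {f : Fin n → α} (h : ∀ i, f (i + 1) = f i) (i j : Fin n) : f i = f j := by
  have hcast : ∀ k : ℕ, f k = f 0 := by
    intro k
    induction k with
    | zero => simp
    | succ k ih => rw [Nat.cast_add_one, h, ih]
  rw [← Fin.cast_val_eq_self i, ← Fin.cast_val_eq_self j, hcast, hcast]

lemma lapM_isHermitian (n : ℕ) [NeZero n] : (lapM n).IsHermitian := by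
  ext i j
  have h1 : i = j + 1 ↔ j = i - 1 := by constructor <;> intro h <;> subst h <;> simp
  have h2 : i = j - 1 ↔ j = i + 1 := by constructor <;> intro h <;> subst h <;> simp
  simp only [conjTranspose_apply, lapM, of_apply, h1, h2, @eq_comm _ i j, star_add,
    apply_ite (star : ℂ → ℂ), star_one, star_zero, star_neg, star_ofNat]
  ring

lemma lapM_mulVec_apply {n : ℕ} [NeZero n] (x : Fin n → ℂ) (i : Fin n) :
    (lapM n *ᵥ x) i = x (i + 1) + x (i - 1) - 2 * x i := by
  simp [lapM, mulVec, dotProduct, add_mul, Finset.sum_add_distrib]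
  ring

/-- The increments `x (i + 1) - x i` are constant along the cycle and sum to zero, hence vanish. -/
lemma eq_of_lapM_mulVec_eq_zero {n : ℕ} [NeZero n] {x : Fin n → ℂ} (h : lapM n *ᵥ x = 0)
    (i j : Fin n) : x i = x j := by
  set d : Fin n → ℂ := fun i => x (i + 1) - x i with hd
  have hd_const : ∀ i, d i = d 0 := by
    refine fun i => Fin.apply_eq_apply_of_forall_apply_add_one (fun i => ?_) i 0
    have := congr_fun h (i + 1)
    rw [lapM_mulVec_apply, add_sub_cancel_right, Pi.zero_apply] at this
    simp only [hd]
    linear_combination this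
  have hd_sum : ∑ i, d i = 0 := by
    rw [Finset.sum_sub_distrib,
      Fintype.sum_equiv (Equiv.addRight 1) (fun i => x (i + 1)) x fun _ => rfl, sub_self]
  have hd_zero : d 0 = 0 := by
    simpa [hd_const _, NeZero.ne n] using hd_sum
  exact Fin.apply_eq_apply_of_forall_apply_add_one
    (fun i => sub_eq_zero.1 ((hd_const i).trans hd_zero)) i j

/-- No nontrivial rotating solutions with damping: if `β > 0` and
`X(t) = X₀ e^{ibt}` solves `X'' + βX' = (-1)^{m+1} M^m X`, then `b = 0` or `X₀ = 0`,
and in either case `X₀` has all entries equal. -/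
theorem no_damped_rotators (n m : ℕ) [NeZero n] (hm : 1 ≤ m)
    (β : ℝ) (hβ : 0 < β) (b : ℝ) (X₀ : Fin n → ℂ)
    (X : ℝ → Fin n → ℂ)
    (hX : ∀ t : ℝ, X t = fun j => X₀ j * Complex.exp (Complex.I * (b : ℂ) * (t : ℂ)))
    (hflow : ∀ t : ℝ, deriv (deriv X) t + β • deriv X t
      = ((-1 : ℂ) ^ (m + 1) • (lapM n) ^ m).mulVec (X t)) :
    (b = 0 ∨ X₀ = 0) ∧ ∀ i j : Fin n, X₀ i = X₀ j := by
  set A := (-1 : ℂ) ^ (m + 1) • lapM n ^ m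
  set μ : ℂ := (I * b) * (I * b) + β * (I * b)
  have hXexp : X = fun t : ℝ => exp (I * b * t) • X₀ := by
    funext t j
    simp [hX, mul_comm]
  have heig : A *ᵥ X₀ = μ • X₀ := by
    have h0 := hflow 0
    rw [hXexp, deriv_cexp_mul_smul, deriv_cexp_mul_smul] at h0
    simp only [ofReal_zero, mul_zero, exp_zero, one_smul] at h0
    rw [← h0]
    funext j
    simp [μ, Complex.real_smul]
    ring
  have hA : A.IsHermitian := ((lapM_isHermitian n).pow m).smul ((IsSelfAdjoint.one ℂ).neg.pow _)
  have hb : b = 0 ∨ X₀ = 0 := by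
    refine or_iff_not_imp_right.2 fun hX₀ => ?_
    have him := hA.im_eq_zero_of_mulVec_eq_smul heig hX₀
    simpa [μ, hβ.ne'] using him
  have hker : lapM n ^ m *ᵥ X₀ = 0 := by
    have hAX : A *ᵥ X₀ = 0 := by
      rcases hb with rfl | rfl
      · simp [heig, μ]
      · simp
    simpa [A, smul_mulVec] using hAX
  exact ⟨hb, eq_of_lapM_mulVec_eq_zero
    ((lapM_isHermitian n).mulVec_eq_zero_of_pow_mulVec_eq_zero hm hker)⟩
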